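/- arXiv:gr-qc/0203040 — 7 statements merged into one kernel-verified Lean document; each statement's English description precedes it below -/
import Mathlib

section
/- Let X be a nontrivial complex Hilbert space, A : D(A) → X a densely defined, closable linear operator, and σ ∈ ℂ such that A − σ is injective. Suppose μ ∈ ℂ, μ ≠ 0, and (η_ν)_{ν∈ℕ} is a sequence in the range of A − σ such that there is ε > 0 with ‖η_ν‖ ≥ ε for all ν, and lim_{ν→∞} [(A − σ)^{-1} η_ν − μ η_ν] = 0. Then σ + μ^{-1} belongs to the spectrum of the closure of A. -/
/-!
Let `T` be the closure of `A` and `c = σ + μ⁻¹`. If `T - c` were bijective, it would have a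
bounded inverse by the closed graph theorem, since `T - c` is closed. But
`(T - c) ξ_ν = η_ν - μ⁻¹ ξ_ν = -μ⁻¹ (ξ_ν - μ η_ν) → 0`, so `ξ_ν → 0`, hence `μ η_ν → 0`,
contradicting `‖η_ν‖ ≥ ε`.
-/

open Filter Topology

namespace LinearPMap

variable {𝕜 E F : Type*} [NontriviallyNormedField 𝕜]
  [NormedAddCommGroup E] [NormedSpace 𝕜 E] [NormedAddCommGroup F] [NormedSpace 𝕜 F]

theorem IsClosed.vadd {T : E →ₗ.[𝕜] F} (hT : T.IsClosed) (f : E →L[𝕜] F) :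
    ((f : E →ₗ[𝕜] F) +ᵥ T).IsClosed := by
  have hgraph : ((f : E →ₗ[𝕜] F) +ᵥ T).graph =
      (fun p : E × F => (p.1, p.2 - f p.1)) ⁻¹' (T.graph : Set (E × F)) := by
    ext ⟨x, y⟩
    simp only [SetLike.mem_coe, Set.mem_preimage, mem_graph_iff, vadd_domain, vadd_apply,
      Subtype.exists, exists_and_left]
    constructor
    · rintro ⟨z, rfl, hz, rfl⟩
      exact ⟨z, rfl, hz, by simp⟩
    · rintro ⟨z, rfl, hz, hTz⟩
      exact ⟨z, rfl, hz, by simp [hTz]⟩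
  rw [LinearPMap.IsClosed, hgraph]
  exact hT.preimage (by fun_prop)

theorem IsClosed.tendsto_zero_of_bijective [CompleteSpace E] [CompleteSpace F]
    {T : E →ₗ.[𝕜] F} (hT : T.IsClosed) (hbij : Function.Bijective T)
    {ι : Type*} {l : Filter ι} {x : ι → T.domain} (hx : Tendsto (fun i => T (x i)) l (𝓝 0)) :
    Tendsto (fun i => (x i : E)) l (𝓝 0) := by
  let g : F →ₗ[𝕜] E := T.domain.subtype ∘ₗ (LinearEquiv.ofBijective T.toFun hbij).symm
  have hgT : ∀ x : T.domain, g (T x) = x := fun x =>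
    congrArg Subtype.val ((LinearEquiv.ofBijective T.toFun hbij).symm_apply_apply x)
  have hgraph : (g.graph : Set (F × E)) = Prod.swap ⁻¹' T.graph := by
    ext ⟨y, z⟩
    simp only [SetLike.mem_coe, Set.mem_preimage, Prod.swap_prod_mk, LinearMap.mem_graph_iff,
      mem_graph_iff]
    constructor
    · rintro rfl
      obtain ⟨x, rfl⟩ := hbij.2 y
      exact ⟨x, (hgT x).symm, rfl⟩
    · rintro ⟨x, rfl, rfl⟩
      exact (hgT x).symm
  have hg : Continuous g := g.continuous_of_isClosed_graph (hgraph ▸ hT.preimage continuous_swap)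
  simpa [Function.comp_def, hgT] using (hg.tendsto 0).comp hx

theorem IsClosed.tendsto_zero_of_bijective_sub_smul [CompleteSpace E]
    {T : E →ₗ.[𝕜] E} (hT : T.IsClosed) {c : 𝕜}
    (hbij : Function.Bijective fun x : T.domain => T x - c • (x : E))
    {ι : Type*} {l : Filter ι} {x : ι → T.domain}
    (hx : Tendsto (fun i => T (x i) - c • (x i : E)) l (𝓝 0)) :
    Tendsto (fun i => (x i : E)) l (𝓝 0) := by
  have hshift : ⇑(((-c • ContinuousLinearMap.id 𝕜 E : E →L[𝕜] E) : E →ₗ[𝕜] E) +ᵥ T) =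
      fun x : T.domain => T x - c • (x : E) :=
    funext fun x => by simp [sub_eq_neg_add]
  exact (hT.vadd _).tendsto_zero_of_bijective (hshift ▸ hbij) (hshift ▸ hx)

end LinearPMap

theorem stmt0_general {X : Type*} [NormedAddCommGroup X] [InnerProductSpace ℂ X] [CompleteSpace X]
    (A : X →ₗ.[ℂ] X) (hclosable : A.IsClosable)
    (σ μ : ℂ) (hμ : μ ≠ 0)
    (ε : ℝ) (hε : 0 < ε)
    (η : ℕ → X) (ξ : ℕ → A.domain)
    (hran : ∀ ν, A (ξ ν) - σ • ((ξ ν : X)) = η ν)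
    (hnorm : ∀ ν, ε ≤ ‖η ν‖)
    (hlim : Tendsto (fun ν => ((ξ ν : X) - μ • η ν)) atTop (𝓝 0)) :
    ¬ Function.Bijective fun x : A.closure.domain => A.closure x - (σ + μ⁻¹) • (x : X) := by
  intro hbij
  let ξ' : ℕ → A.closure.domain := fun ν => ⟨ξ ν, A.le_closure.1 (ξ ν).2⟩
  have hresid : ∀ ν,
      A.closure (ξ' ν) - (σ + μ⁻¹) • (ξ' ν : X) = -μ⁻¹ • ((ξ ν : X) - μ • η ν) := by
    intro ν
    rw [← A.le_closure.2 rfl, ← hran ν]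
    match_scalars
    · field_simp
    · field_simp; ring
  have hξ : Tendsto (fun ν => (ξ ν : X)) atTop (𝓝 0) :=
    hclosable.closure_isClosed.tendsto_zero_of_bijective_sub_smul hbij
      (x := ξ') (by simpa [hresid] using hlim.const_smul (-μ⁻¹))
  have hη : Tendsto η atTop (𝓝 0) := by
    simpa [smul_sub, hμ] using (hξ.sub hlim).const_smul μ⁻¹
  exact hε.not_ge (by simpa using ge_of_tendsto' hη.norm hnorm)

/-- If `A` is a densely defined closable operator in a nontrivial complex Hilbert space,
`A - σ` is injective, `μ ≠ 0`, and `(η_ν)` is a sequence in the range of `A - σ`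
(with preimages `ξ_ν`, i.e. `ξ_ν = (A - σ)⁻¹ η_ν`), bounded below in norm by `ε > 0`,
such that `(A - σ)⁻¹ η_ν - μ η_ν → 0`, then `σ + μ⁻¹` is in the spectrum of the closure
of `A`, i.e. `closure A - (σ + μ⁻¹)` is not bijective. -/
theorem stmt0 {X : Type*} [NormedAddCommGroup X] [InnerProductSpace ℂ X] [CompleteSpace X]
    [Nontrivial X]
    (A : X →ₗ.[ℂ] X) (hdense : Dense (A.domain : Set X)) (hclosable : A.IsClosable)
    (σ μ : ℂ) (hμ : μ ≠ 0)
    (hinj : Function.Injective fun x : A.domain => A x - σ • (x : X))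
    (ε : ℝ) (hε : 0 < ε)
    (η : ℕ → X) (ξ : ℕ → A.domain)
    (hran : ∀ ν, A (ξ ν) - σ • ((ξ ν : X)) = η ν)
    (hnorm : ∀ ν, ε ≤ ‖η ν‖)
    (hlim : Tendsto (fun ν => ((ξ ν : X) - μ • η ν)) atTop (𝓝 0)) :
    ¬ Function.Bijective fun x : A.closure.domain => A.closure x - (σ + μ⁻¹) • (x : X) :=
  stmt0_general A hclosable σ μ hμ ε hε η ξ hran hnorm hlim
end

section
/- Let γ₁, γ₂ ∈ ℂ be the two roots of the quadratic equation γ² − b γ − σ² = 0, where b ∈ ℂ and σ ∈ ℂ with Re(σ) ≠ 0. If |b| < 2|Re(σ)|, then one root has strictly negative real part and the other has strictly positive real part. -/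
/-!
By Vieta, `γ₁ + γ₂ = b` and `(γ₁ - γ₂)² = b² + (2σ)²`, and
`4 Re γ₁ Re γ₂ = (Re b)² - (Re (γ₁ - γ₂))²`. For any `δ`, `2 (Re δ)² = ‖δ²‖ + Re (δ²)`;
combined with `‖b² + s²‖ ≥ ‖s‖² - ‖b‖²` this gives `(Re b)² < (Re δ)²` whenever
`δ² = b² + s²` and `‖b‖ < |Re s|`.
-/

namespace Complex

theorem two_mul_re_sq (δ : ℂ) : 2 * δ.re ^ 2 = ‖δ ^ 2‖ + (δ ^ 2).re := by
  rw [norm_pow, Complex.sq_norm, normSq_apply, sq δ, mul_re]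
  ring

theorem re_sq_lt_re_sq_of_sq_eq_add_sq {b s δ : ℂ} (h : δ ^ 2 = b ^ 2 + s ^ 2)
    (hb : ‖b‖ < |s.re|) : b.re ^ 2 < δ.re ^ 2 := by
  have hδ := two_mul_re_sq δ
  have hbre := two_mul_re_sq b
  have hsre := two_mul_re_sq s
  have htri : ‖s‖ ^ 2 ≤ ‖b ^ 2 + s ^ 2‖ + ‖b‖ ^ 2 := by
    calc ‖s‖ ^ 2 = ‖(b ^ 2 + s ^ 2) - b ^ 2‖ := by rw [add_sub_cancel_left, norm_pow]
      _ ≤ ‖b ^ 2 + s ^ 2‖ + ‖b‖ ^ 2 := by rw [← norm_pow]; exact norm_sub_le _ _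
  have hbs : ‖b‖ ^ 2 < s.re ^ 2 := by
    simpa [sq_abs] using pow_lt_pow_left₀ hb (norm_nonneg b) two_ne_zero
  rw [h, add_re] at hδ
  rw [norm_pow] at hbre hsre
  linarith

theorem re_mul_re_neg_of_sub_sq_eq {z w s : ℂ} (h : (z - w) ^ 2 = (z + w) ^ 2 + s ^ 2)
    (hs : ‖z + w‖ < |s.re|) : z.re * w.re < 0 := by
  have hlt := re_sq_lt_re_sq_of_sq_eq_add_sq h hs
  simp only [add_re, sub_re] at hlt
  nlinarith

end Complex

theorem stmt3_general (b σ γ₁ γ₂ : ℂ)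
    (hroots : ∀ γ : ℂ, γ ^ 2 - b * γ - σ ^ 2 = (γ - γ₁) * (γ - γ₂))
    (hb : ‖b‖ < 2 * |σ.re|) :
    (γ₁.re < 0 ∧ 0 < γ₂.re) ∨ (γ₂.re < 0 ∧ 0 < γ₁.re) := by
  have hsum : γ₁ + γ₂ = b := by linear_combination hroots 1 - hroots 0
  have hdisc : (γ₁ - γ₂) ^ 2 = (γ₁ + γ₂) ^ 2 + (2 * σ) ^ 2 := by
    linear_combination 4 * hroots 0
  have hs : ‖γ₁ + γ₂‖ < |(2 * σ).re| := by
    simpa [hsum, abs_mul] using hb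
  rcases mul_neg_iff.mp (Complex.re_mul_re_neg_of_sub_sq_eq hdisc hs) with ⟨h₁, h₂⟩ | ⟨h₁, h₂⟩
  · exact Or.inr ⟨h₂, h₁⟩
  · exact Or.inl ⟨h₁, h₂⟩

/-- If `γ₁, γ₂` are the two roots of `γ² − bγ − σ² = 0` with `Re σ ≠ 0` and `|b| < 2|Re σ|`,
then one root has strictly negative real part and the other strictly positive real part. -/
theorem stmt3 (b σ γ₁ γ₂ : ℂ) (hσ : σ.re ≠ 0)
    (hroots : ∀ γ : ℂ, γ ^ 2 - b * γ - σ ^ 2 = (γ - γ₁) * (γ - γ₂))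
    (hb : ‖b‖ < 2 * |σ.re|) :
    (γ₁.re < 0 ∧ 0 < γ₂.re) ∨ (γ₂.re < 0 ∧ 0 < γ₁.re) :=
  stmt3_general b σ γ₁ γ₂ hroots hb
end

section
/- Let m be a nonzero integer, Ω > 0, Λ = l(l+1) with l ≥ 2 an integer, and M > 0. Consider the quadratic p(γ) = γ² − c(σ) γ − σ² with c(σ) = (16 m² M Ω² / Λ²) · σ / (σ − (i m / Λ)(Λ − 2) Ω). Then for every σ ∈ ℂ with |Re(σ)| > (|m| Ω / Λ)(Λ − 2 + 8 |m| M Ω / Λ), the polynomial p has one root with strictly positive real part and one root with strictly negative real part. -/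
/-!
Write `γ₁, γ₂` for the roots of `p`, so that `γ₁ + γ₂ = c` and `γ₁ γ₂ = -σ²`. Since
`4 (Re σ)² = 2 (|σ|² + Re σ²) = 2 (|γ₁ γ₂| - Re (γ₁ γ₂))`, one gets the identity
`|γ₁ + γ₂|² - 4 (Re σ)² = (|γ₁| - |γ₂|)² + 4 Re γ₁ Re γ₂`,
so the roots lie in opposite open half-planes as soon as `|c| < 2 |Re σ|`. For
`c = k σ / (σ - iβ)` this holds whenever `|β| + |k| / 2 < |Re σ|`, because `|σ - iβ| ≥ |Re σ|`
and `|σ| ≤ |σ - iβ| + |β|`; for the coefficient of the theorem, `|β| + |k| / 2` is exactly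
the bound `(|m| Ω / Λ)(Λ - 2 + 8 |m| M Ω / Λ)`.
-/

open Complex

namespace Complex

theorem re_mul_re_neg_of_mul_eq_neg_sq {γ₁ γ₂ σ : ℂ} (hprod : γ₁ * γ₂ = -σ ^ 2)
    (hsum : ‖γ₁ + γ₂‖ < 2 * |σ.re|) : γ₁.re * γ₂.re < 0 := by
  have hnorm : ‖σ‖ ^ 2 = ‖γ₁‖ * ‖γ₂‖ := by rw [← norm_pow, ← norm_mul, hprod, norm_neg]
  have hre : (γ₁ * γ₂).re = -(σ ^ 2).re := by rw [hprod, neg_re]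
  have hσ : ‖σ‖ ^ 2 = σ.re ^ 2 + σ.im ^ 2 := by rw [Complex.sq_norm, normSq_apply]; ring
  have h₁ : ‖γ₁‖ ^ 2 = γ₁.re ^ 2 + γ₁.im ^ 2 := by rw [Complex.sq_norm, normSq_apply]; ring
  have h₂ : ‖γ₂‖ ^ 2 = γ₂.re ^ 2 + γ₂.im ^ 2 := by rw [Complex.sq_norm, normSq_apply]; ring
  have hsum' : ‖γ₁ + γ₂‖ ^ 2 < 4 * σ.re ^ 2 := by
    have := sq_lt_sq' (by linarith [norm_nonneg (γ₁ + γ₂)]) hsum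
    rwa [mul_pow, sq_abs, show (2 : ℝ) ^ 2 = 4 by norm_num] at this
  have h₁₂ : ‖γ₁ + γ₂‖ ^ 2 = (γ₁.re + γ₂.re) ^ 2 + (γ₁.im + γ₂.im) ^ 2 := by
    rw [Complex.sq_norm, normSq_apply, add_re, add_im]; ring
  simp only [sq, mul_re] at hre
  have key : ‖γ₁ + γ₂‖ ^ 2 - 4 * σ.re ^ 2 = (‖γ₁‖ - ‖γ₂‖) ^ 2 + 4 * (γ₁.re * γ₂.re) := by
    linear_combination h₁₂ - h₁ - h₂ - 2 * hnorm + 2 * hσ - 2 * hre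
  linarith [sq_nonneg (‖γ₁‖ - ‖γ₂‖)]

theorem exists_add_eq_and_mul_eq (c d : ℂ) : ∃ γ₁ γ₂ : ℂ, γ₁ + γ₂ = c ∧ γ₁ * γ₂ = d := by
  obtain ⟨w, hw⟩ := IsAlgClosed.exists_eq_mul_self (c ^ 2 - 4 * d)
  exact ⟨(c - w) / 2, (c + w) / 2, by ring, by linear_combination hw / 4⟩

theorem exists_factorization_re_neg_re_pos {c σ : ℂ} (h : ‖c‖ < 2 * |σ.re|) :
    ∃ γ₁ γ₂ : ℂ, (∀ γ : ℂ, γ ^ 2 - c * γ - σ ^ 2 = (γ - γ₁) * (γ - γ₂)) ∧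
      γ₁.re < 0 ∧ 0 < γ₂.re := by
  obtain ⟨γ₁, γ₂, hsum, hprod⟩ := exists_add_eq_and_mul_eq c (-σ ^ 2)
  have hfactor (γ : ℂ) : γ ^ 2 - c * γ - σ ^ 2 = (γ - γ₁) * (γ - γ₂) := by
    linear_combination γ * hsum - hprod
  have hopp := re_mul_re_neg_of_mul_eq_neg_sq hprod (hsum ▸ h)
  rcases mul_neg_iff.mp hopp with ⟨hpos, hneg⟩ | ⟨hneg, hpos⟩
  · exact ⟨γ₂, γ₁, fun γ => (hfactor γ).trans (mul_comm _ _), hneg, hpos⟩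
  · exact ⟨γ₁, γ₂, hfactor, hneg, hpos⟩

theorem norm_mul_div_sub_mul_I_lt {k σ : ℂ} {β : ℝ} (h : |β| + ‖k‖ / 2 < |σ.re|) :
    ‖k * σ / (σ - β * I)‖ < 2 * |σ.re| := by
  set d := σ - β * I
  have hre : |σ.re| ≤ ‖d‖ := by simpa [d] using abs_re_le_norm d
  have hσ : ‖σ‖ ≤ ‖d‖ + |β| := by simpa [d] using norm_add_le d (β * I)
  have hd : 0 < ‖d‖ := lt_of_lt_of_le (by linarith [abs_nonneg β, norm_nonneg k]) hre
  rw [norm_div, norm_mul, div_lt_iff₀ hd]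
  nlinarith [mul_le_mul_of_nonneg_left hσ (norm_nonneg k), abs_nonneg β, norm_nonneg k]

end Complex

theorem stmt5_general (m l : ℤ) (hl : 2 ≤ l) (Ω M Λ : ℝ)
    (hΛ : Λ = (l : ℝ) * ((l : ℝ) + 1)) (hΩ : 0 < Ω) (hM : 0 < M) (σ : ℂ)
    (hσ : ((|m| : ℝ) * Ω / Λ) * (Λ - 2 + 8 * (|m| : ℝ) * M * Ω / Λ) < |σ.re|) :
    ∃ γ₁ γ₂ : ℂ,
      (∀ γ : ℂ,
        γ ^ 2 - ((16 * (m : ℂ) ^ 2 * (M : ℂ) * (Ω : ℂ) ^ 2 / (Λ : ℂ) ^ 2) * σ /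
            (σ - ((m : ℂ) * Complex.I / (Λ : ℂ)) * ((Λ : ℂ) - 2) * (Ω : ℂ))) * γ - σ ^ 2
          = (γ - γ₁) * (γ - γ₂)) ∧
      γ₁.re < 0 ∧ 0 < γ₂.re := by
  have hΛ2 : 2 ≤ Λ := by
    have : (2 : ℝ) ≤ l := by exact_mod_cast hl
    nlinarith
  set k : ℝ := 16 * m ^ 2 * M * Ω ^ 2 / Λ ^ 2
  set β : ℝ := m * Ω * (Λ - 2) / Λ
  have hcoeff : (16 * (m : ℂ) ^ 2 * (M : ℂ) * (Ω : ℂ) ^ 2 / (Λ : ℂ) ^ 2) * σ /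
      (σ - ((m : ℂ) * I / (Λ : ℂ)) * ((Λ : ℂ) - 2) * (Ω : ℂ)) = (k : ℂ) * σ / (σ - β * I) := by
    simp only [k, β]; push_cast; ring
  have hbound :
      |β| + ‖(k : ℂ)‖ / 2 = ((|m| : ℝ) * Ω / Λ) * (Λ - 2 + 8 * (|m| : ℝ) * M * Ω / Λ) := by
    rw [norm_real, Real.norm_of_nonneg (by positivity), abs_div, abs_mul, abs_mul,
      abs_of_pos hΩ, abs_of_nonneg (by linarith : 0 ≤ Λ - 2), abs_of_pos (by linarith : 0 < Λ)]
    have hm2 : (m : ℝ) ^ 2 = |(m : ℝ)| ^ 2 := (sq_abs _).symm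
    simp only [k, hm2]
    field_simp
    ring
  rw [hcoeff]
  exact exists_factorization_re_neg_re_pos (norm_mul_div_sub_mul_I_lt (hbound ▸ hσ))

/-- Rouché estimate: for `|Re σ| > (|m|Ω/Λ)(Λ − 2 + 8|m|MΩ/Λ)`, the characteristic quadratic
`γ² − c(σ)γ − σ²` with `c(σ) = (16m²MΩ²/Λ²)·σ/(σ − (im/Λ)(Λ−2)Ω)` has one root with strictly
positive real part and one with strictly negative real part. -/
theorem stmt5 (m l : ℤ) (hm : m ≠ 0) (hl : 2 ≤ l) (Ω M Λ : ℝ)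
    (hΛ : Λ = (l : ℝ) * ((l : ℝ) + 1)) (hΩ : 0 < Ω) (hM : 0 < M) (σ : ℂ)
    (hσ : ((|m| : ℝ) * Ω / Λ) * (Λ - 2 + 8 * (|m| : ℝ) * M * Ω / Λ) < |σ.re|) :
    ∃ γ₁ γ₂ : ℂ,
      (∀ γ : ℂ,
        γ ^ 2 - ((16 * (m : ℂ) ^ 2 * (M : ℂ) * (Ω : ℂ) ^ 2 / (Λ : ℂ) ^ 2) * σ /
            (σ - ((m : ℂ) * Complex.I / (Λ : ℂ)) * ((Λ : ℂ) - 2) * (Ω : ℂ))) * γ - σ ^ 2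
          = (γ - γ₁) * (γ - γ₂)) ∧
      γ₁.re < 0 ∧ 0 < γ₂.re :=
  stmt5_general m l hl Ω M Λ hΛ hΩ hM σ hσ
end

section
/- Let m be a nonzero integer, Ω > 0, Λ = l(l+1) with integer l ≥ 2, M > 0, and let c(σ) = (16 m² M Ω² / Λ²) · σ / (σ − (i m/Λ)(Λ−2) Ω). If σ ∈ ℂ satisfies |Re(σ)| > (|m| Ω / Λ)(Λ − 2 + 8 |m| M Ω / Λ), then |c(σ)| < 2 |Re(σ)|. -/
/-!
Write `c(σ) = K σ / (σ - α i)` with `α = m(Λ-2)Ω/Λ` and `K = 16m²MΩ²/Λ² ≥ 0`; for `Λ > 2` the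
hypothesis says exactly `|α| + K/2 < |Re σ|`. With `D = |σ - α i|` we have `|Re σ| ≤ D` and
`|σ| ≤ D + |α|`, so `K|σ| ≤ KD + K|α| ≤ KD + 2|α|D < 2|Re σ| D`, using `K/2 < D`.
-/

open Complex

lemma mul_lt_two_mul_of_add_half_lt {a K R D S : ℝ} (ha : 0 ≤ a) (hK : 0 ≤ K)
    (h : a + K / 2 < R) (hRD : R ≤ D) (hSD : S ≤ D + a) : K * S < 2 * R * D := by
  have hD : K / 2 < D := by linarith
  calc K * S ≤ K * D + K * a := by nlinarith
    _ ≤ K * D + 2 * a * D := by nlinarith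
    _ < 2 * R * D := by nlinarith

lemma norm_ofReal_mul_div_sub_ofReal_mul_I_lt {a K : ℝ} {σ : ℂ} (hK : 0 ≤ K)
    (h : |a| + K / 2 < |σ.re|) : ‖(K : ℂ) * σ / (σ - a * I)‖ < 2 * |σ.re| := by
  set D := ‖σ - a * I‖
  have hRD : |σ.re| ≤ D := by
    simpa using Complex.abs_re_le_norm (σ - a * I)
  have hSD : ‖σ‖ ≤ D + |a| := by
    simpa using norm_add_le (σ - a * I) (a * I)
  have hD : 0 < D := by linarith [abs_nonneg a]
  rw [norm_div, norm_mul, norm_real, Real.norm_of_nonneg hK, div_lt_iff₀ hD]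
  exact mul_lt_two_mul_of_add_half_lt (abs_nonneg a) hK h hRD hSD

theorem stmt6_general (m l : ℤ) (hl : 2 ≤ l) (Ω M Λ : ℝ)
    (hΛ : Λ = (l : ℝ) * ((l : ℝ) + 1)) (hΩ : 0 < Ω) (hM : 0 < M) (σ : ℂ)
    (hσ : ((|m| : ℝ) * Ω / Λ) * (Λ - 2 + 8 * (|m| : ℝ) * M * Ω / Λ) < |σ.re|) :
    ‖(16 * (m : ℂ) ^ 2 * (M : ℂ) * (Ω : ℂ) ^ 2 / (Λ : ℂ) ^ 2) * σ /
        (σ - ((m : ℂ) * Complex.I / (Λ : ℂ)) * ((Λ : ℂ) - 2) * (Ω : ℂ))‖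
      < 2 * |σ.re| := by
  have hΛ2 : 2 < Λ := by
    have : (2 : ℝ) ≤ l := by exact_mod_cast hl
    rw [hΛ]; nlinarith
  set α : ℝ := m * (Λ - 2) * Ω / Λ
  set K : ℝ := 16 * m ^ 2 * M * Ω ^ 2 / Λ ^ 2
  have hα : |α| + K / 2 = ((|m| : ℝ) * Ω / Λ) * (Λ - 2 + 8 * (|m| : ℝ) * M * Ω / Λ) := by
    rw [abs_div, abs_mul, abs_mul, abs_of_pos hΩ, abs_of_pos (by linarith : 0 < Λ),
      abs_of_pos (by linarith : 0 < Λ - 2)]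
    simp only [K]
    field_simp
    rw [← sq_abs]
    ring
  have hc : (16 * (m : ℂ) ^ 2 * (M : ℂ) * (Ω : ℂ) ^ 2 / (Λ : ℂ) ^ 2) * σ /
      (σ - ((m : ℂ) * I / (Λ : ℂ)) * ((Λ : ℂ) - 2) * (Ω : ℂ)) = (K : ℂ) * σ / (σ - α * I) := by
    push_cast [K, α]
    ring
  rw [hc]
  exact norm_ofReal_mul_div_sub_ofReal_mul_I_lt (by positivity) (hα ▸ hσ)

/-- Key estimate for the Rouché argument: if
`|Re σ| > (|m|Ω/Λ)(Λ − 2 + 8|m|MΩ/Λ)` then `|c(σ)| < 2|Re σ|`, where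
`c(σ) = (16m²MΩ²/Λ²)·σ/(σ − (im/Λ)(Λ−2)Ω)`. -/
theorem stmt6 (m l : ℤ) (hm : m ≠ 0) (hl : 2 ≤ l) (Ω M Λ : ℝ)
    (hΛ : Λ = (l : ℝ) * ((l : ℝ) + 1)) (hΩ : 0 < Ω) (hM : 0 < M) (σ : ℂ)
    (hσ : ((|m| : ℝ) * Ω / Λ) * (Λ - 2 + 8 * (|m| : ℝ) * M * Ω / Λ) < |σ.re|) :
    ‖(16 * (m : ℂ) ^ 2 * (M : ℂ) * (Ω : ℂ) ^ 2 / (Λ : ℂ) ^ 2) * σ /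
        (σ - ((m : ℂ) * Complex.I / (Λ : ℂ)) * ((Λ : ℂ) - 2) * (Ω : ℂ))‖
      < 2 * |σ.re| :=
  stmt6_general m l hl Ω M Λ hΛ hΩ hM σ hσ
end

section
/- Let m ∈ ℤ, Λ = l(l+1), l ≥ 2, and ω, ϖ, ν, λ : (0,∞) → ℝ with ϖ = Ω − ω, and suppose 1 − (m²/Λ) ω(r) ϖ(r) r² e^{−ν(r)} > 0 for all r > 0. Define p₁ = (im/Λ) r² e^{−λ} ϖ, p₃ = e^{ν−λ} + (imσ/Λ) ϖ r² e^{−λ}, p₄ = (r/2)(σ − imω), q₄ = (e^{ν}/(2r))(Λ−2) + (σ/2 − imω)σr. Then p₁ q₄ − p₃ p₄ = −(r/2) e^{ν−λ} [ (1 − (m²/Λ) ω ϖ r² e^{−ν}) σ − i m (Ω − (2/Λ) ϖ) ], and this vanishes for some r > 0 if and only if σ = i m (Ω − (2/Λ)ϖ(r)) / (1 − (m²/Λ) ω(r) ϖ(r) r² e^{−ν(r)}) for some r > 0; in particular p₁q₄ − p₃p₄ vanishes only for purely imaginary σ. -/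
/-!
The `σ²` terms of `p₁q₄` and `p₃p₄` cancel, so `p₁q₄ − p₃p₄` is affine in `σ`; pulling out the
nonvanishing factor `−(r/2)e^{ν−λ}` leaves `Aσ − imB` with `A` the positive real number of the
restriction and `B` real. Its zeros are therefore `σ = imB/A`, which is purely imaginary.
-/

lemma kojima_leading_coeff_eq (m Λ Ω r ω E F : ℝ) (σ : ℂ) (hΛ : Λ ≠ 0) (hr : r ≠ 0)
    (hE : E ≠ 0) :
    ((m : ℂ) * Complex.I / (Λ : ℂ)) * (r : ℂ) ^ 2 * (F : ℂ) * ((Ω - ω : ℝ) : ℂ) *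
      (((E / (2 * r) : ℝ) : ℂ) * ((Λ : ℂ) - 2)
        + (σ / 2 - (m : ℂ) * Complex.I * (ω : ℂ)) * σ * (r : ℂ))
    - (((E * F : ℝ) : ℂ)
        + ((m : ℂ) * Complex.I * σ / (Λ : ℂ)) * ((Ω - ω : ℝ) : ℂ) * (r : ℂ) ^ 2 * (F : ℂ))
      * (((r : ℂ) / 2) * (σ - (m : ℂ) * Complex.I * (ω : ℂ)))
    = -((r : ℂ) / 2) * ((E * F : ℝ) : ℂ) *
        (((1 - (m ^ 2 / Λ) * ω * (Ω - ω) * r ^ 2 * E⁻¹ : ℝ) : ℂ) * σ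
          - Complex.I * (m : ℂ) * ((Ω - (2 / Λ) * (Ω - ω) : ℝ) : ℂ)) := by
  have hΛ' : (Λ : ℂ) ≠ 0 := Complex.ofReal_ne_zero.mpr hΛ
  have hr' : (r : ℂ) ≠ 0 := Complex.ofReal_ne_zero.mpr hr
  have hE' : (E : ℂ) ≠ 0 := Complex.ofReal_ne_zero.mpr hE
  push_cast
  field_simp
  linear_combination (-(m : ℂ) ^ 2 * (r : ℂ) ^ 2 * ((Ω : ℂ) - ω) * σ * ω * F) * Complex.I_sq

lemma neg_half_mul_exp_mul_sub_eq_zero_iff {r e A : ℝ} (z σ : ℂ) (hr : r ≠ 0) (hA : A ≠ 0) :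
    -((r : ℂ) / 2) * ((Real.exp e : ℝ) : ℂ) * ((A : ℂ) * σ - z) = 0 ↔ σ = z / A := by
  have hA' : (A : ℂ) ≠ 0 := Complex.ofReal_ne_zero.mpr hA
  simp [hr, sub_eq_zero, eq_div_iff hA', mul_comm]

theorem stmt11_general (m l : ℤ) (hl : 2 ≤ l) (Λ : ℝ) (hΛ : Λ = (l : ℝ) * ((l : ℝ) + 1))
    (Ω : ℝ) (ω ϖ ν lam : ℝ → ℝ)
    (hϖ : ∀ r : ℝ, ϖ r = Ω - ω r)
    (hpos : ∀ r > (0:ℝ), 0 < 1 - ((m : ℝ) ^ 2 / Λ) * ω r * ϖ r * r ^ 2 * Real.exp (-ν r))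
    (σ : ℂ) (p₁ p₃ p₄ q₄ : ℝ → ℂ)
    (hp₁ : ∀ r : ℝ, p₁ r = ((m : ℂ) * Complex.I / (Λ : ℂ)) * (r : ℂ) ^ 2 *
        ((Real.exp (-lam r) : ℝ) : ℂ) * ((ϖ r : ℝ) : ℂ))
    (hp₃ : ∀ r : ℝ, p₃ r = ((Real.exp (ν r - lam r) : ℝ) : ℂ)
        + ((m : ℂ) * Complex.I * σ / (Λ : ℂ)) * ((ϖ r : ℝ) : ℂ) * (r : ℂ) ^ 2 *
          ((Real.exp (-lam r) : ℝ) : ℂ))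
    (hp₄ : ∀ r : ℝ, p₄ r = ((r : ℂ) / 2) * (σ - (m : ℂ) * Complex.I * ((ω r : ℝ) : ℂ)))
    (hq₄ : ∀ r : ℝ, q₄ r = ((Real.exp (ν r) / (2 * r) : ℝ) : ℂ) * ((Λ : ℂ) - 2)
        + (σ / 2 - (m : ℂ) * Complex.I * ((ω r : ℝ) : ℂ)) * σ * (r : ℂ)) :
    (∀ r > (0:ℝ), p₁ r * q₄ r - p₃ r * p₄ r
        = -((r : ℂ) / 2) * ((Real.exp (ν r - lam r) : ℝ) : ℂ) *
          (((1 - ((m : ℝ) ^ 2 / Λ) * ω r * ϖ r * r ^ 2 * Real.exp (-ν r) : ℝ) : ℂ) * σ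
            - Complex.I * (m : ℂ) * (((Ω - (2 / Λ) * ϖ r : ℝ)) : ℂ))) ∧
    ((∃ r > (0:ℝ), p₁ r * q₄ r - p₃ r * p₄ r = 0) ↔
      ∃ r > (0:ℝ), σ = Complex.I * (m : ℂ) * (((Ω - (2 / Λ) * ϖ r : ℝ)) : ℂ) /
        (((1 - ((m : ℝ) ^ 2 / Λ) * ω r * ϖ r * r ^ 2 * Real.exp (-ν r) : ℝ)) : ℂ)) ∧
    ((∃ r > (0:ℝ), p₁ r * q₄ r - p₃ r * p₄ r = 0) → σ.re = 0) := by
  have hΛ0 : Λ ≠ 0 := by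
    have hl' : (2 : ℝ) ≤ l := by exact_mod_cast hl
    rw [hΛ]; positivity
  have hfactor : ∀ r > (0:ℝ), p₁ r * q₄ r - p₃ r * p₄ r
      = -((r : ℂ) / 2) * ((Real.exp (ν r - lam r) : ℝ) : ℂ) *
        (((1 - ((m : ℝ) ^ 2 / Λ) * ω r * ϖ r * r ^ 2 * Real.exp (-ν r) : ℝ) : ℂ) * σ
          - Complex.I * (m : ℂ) * (((Ω - (2 / Λ) * ϖ r : ℝ)) : ℂ)) := by
    intro r hr
    rw [hp₁, hp₃, hp₄, hq₄, hϖ, sub_eq_add_neg (ν r), Real.exp_add, Real.exp_neg (ν r)]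
    exact_mod_cast kojima_leading_coeff_eq m Λ Ω r (ω r) _ _ σ hΛ0 hr.ne' (Real.exp_ne_zero _)
  have hzero : ∀ r > (0:ℝ), p₁ r * q₄ r - p₃ r * p₄ r = 0 ↔
      σ = Complex.I * (m : ℂ) * (((Ω - (2 / Λ) * ϖ r : ℝ)) : ℂ) /
        (((1 - ((m : ℝ) ^ 2 / Λ) * ω r * ϖ r * r ^ 2 * Real.exp (-ν r) : ℝ)) : ℂ) := by
    intro r hr
    rw [hfactor r hr]
    exact neg_half_mul_exp_mul_sub_eq_zero_iff _ σ hr.ne' (hpos r hr).ne'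
  have hvanish_iff := exists_congr fun r => and_congr_right (hzero r)
  refine ⟨hfactor, hvanish_iff, fun hvanish => ?_⟩
  obtain ⟨r, -, hσ⟩ := hvanish_iff.mp hvanish
  rw [hσ, Complex.div_ofReal_re]
  simp

/-- The leading coefficient `p₁q₄ − p₃p₄` of the decoupled resolvent equation equals
`−(r/2)e^{ν−λ}[(1 − (m²/Λ)ωϖr²e^{−ν})σ − im(Ω − (2/Λ)ϖ)]`, and it vanishes for some
`r > 0` iff `σ = im(Ω − (2/Λ)ϖ(r))/(1 − (m²/Λ)ω(r)ϖ(r)r²e^{−ν(r)})` for some `r > 0`;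
in particular it vanishes only for purely imaginary `σ`. -/
theorem stmt11 (m l : ℤ) (hl : 2 ≤ l) (Λ : ℝ) (hΛ : Λ = (l : ℝ) * ((l : ℝ) + 1))
    (Ω : ℝ) (hΩ : 0 < Ω) (ω ϖ ν lam : ℝ → ℝ)
    (hϖ : ∀ r : ℝ, ϖ r = Ω - ω r)
    (hpos : ∀ r > (0:ℝ), 0 < 1 - ((m : ℝ) ^ 2 / Λ) * ω r * ϖ r * r ^ 2 * Real.exp (-ν r))
    (σ : ℂ) (p₁ p₃ p₄ q₄ : ℝ → ℂ)
    (hp₁ : ∀ r : ℝ, p₁ r = ((m : ℂ) * Complex.I / (Λ : ℂ)) * (r : ℂ) ^ 2 *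
        ((Real.exp (-lam r) : ℝ) : ℂ) * ((ϖ r : ℝ) : ℂ))
    (hp₃ : ∀ r : ℝ, p₃ r = ((Real.exp (ν r - lam r) : ℝ) : ℂ)
        + ((m : ℂ) * Complex.I * σ / (Λ : ℂ)) * ((ϖ r : ℝ) : ℂ) * (r : ℂ) ^ 2 *
          ((Real.exp (-lam r) : ℝ) : ℂ))
    (hp₄ : ∀ r : ℝ, p₄ r = ((r : ℂ) / 2) * (σ - (m : ℂ) * Complex.I * ((ω r : ℝ) : ℂ)))
    (hq₄ : ∀ r : ℝ, q₄ r = ((Real.exp (ν r) / (2 * r) : ℝ) : ℂ) * ((Λ : ℂ) - 2)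
        + (σ / 2 - (m : ℂ) * Complex.I * ((ω r : ℝ) : ℂ)) * σ * (r : ℂ)) :
    (∀ r > (0:ℝ), p₁ r * q₄ r - p₃ r * p₄ r
        = -((r : ℂ) / 2) * ((Real.exp (ν r - lam r) : ℝ) : ℂ) *
          (((1 - ((m : ℝ) ^ 2 / Λ) * ω r * ϖ r * r ^ 2 * Real.exp (-ν r) : ℝ) : ℂ) * σ
            - Complex.I * (m : ℂ) * (((Ω - (2 / Λ) * ϖ r : ℝ)) : ℂ))) ∧
    ((∃ r > (0:ℝ), p₁ r * q₄ r - p₃ r * p₄ r = 0) ↔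
      ∃ r > (0:ℝ), σ = Complex.I * (m : ℂ) * (((Ω - (2 / Λ) * ϖ r : ℝ)) : ℂ) /
        (((1 - ((m : ℝ) ^ 2 / Λ) * ω r * ϖ r * r ^ 2 * Real.exp (-ν r) : ℝ)) : ℂ)) ∧
    ((∃ r > (0:ℝ), p₁ r * q₄ r - p₃ r * p₄ r = 0) → σ.re = 0) :=
  stmt11_general m l hl Λ hΛ Ω ω ϖ ν lam hϖ hpos σ p₁ p₃ p₄ q₄ hp₁ hp₃ hp₄ hq₄
end

section
/- Let ϖ : [0,∞) → ℝ be a C² solution of (j r⁴ ϖ')' = 16π(ρ+p) e^{λ} j r⁴ ϖ on (0,R), where j, ρ, p, e^{λ} are positive continuous functions, with ϖ(0) = ϖ₀ > 0 and ϖ'(0) = 0. Then ϖ is monotonically increasing on [0,R], so that ϖ₀ ≤ ϖ(r) for all r ∈ [0,R]. -/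
open Set

/-- Monotonicity of the frame-dragging function: if `ϖ` solves
`(j r⁴ ϖ')' = 16π(ρ+p)e^{λ}jr⁴ϖ` on `(0,R)` with positive continuous coefficients,
`ϖ(0) = ϖ₀ > 0` and `ϖ'(0) = 0`, then `ϖ` is monotonically increasing on `[0,R]`,
so `ϖ₀ ≤ ϖ(r)` for all `r ∈ [0,R]`. -/
theorem stmt13 (R ϖ₀ : ℝ) (hR : 0 < R) (j ρ p elam : ℝ → ℝ)
    (hjc : ContinuousOn j (Icc 0 R)) (hρc : ContinuousOn ρ (Icc 0 R))
    (hpc : ContinuousOn p (Icc 0 R)) (helamc : ContinuousOn elam (Icc 0 R))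
    (hjpos : ∀ r ∈ Icc (0:ℝ) R, 0 < j r) (hρpos : ∀ r ∈ Icc (0:ℝ) R, 0 < ρ r)
    (hppos : ∀ r ∈ Icc (0:ℝ) R, 0 < p r) (helampos : ∀ r ∈ Icc (0:ℝ) R, 0 < elam r)
    (ϖ ϖ' : ℝ → ℝ)
    (hϖc : ContinuousOn ϖ (Icc 0 R)) (hϖ'c : ContinuousOn ϖ' (Icc 0 R))
    (hder : ∀ r ∈ Ioo (0:ℝ) R, HasDerivAt ϖ (ϖ' r) r)
    (hode : ∀ r ∈ Ioo (0:ℝ) R, HasDerivAt (fun s => j s * s ^ 4 * ϖ' s)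
        (16 * Real.pi * (ρ r + p r) * elam r * j r * r ^ 4 * ϖ r) r)
    (h0 : ϖ 0 = ϖ₀) (hϖ₀ : 0 < ϖ₀) (h0' : ϖ' 0 = 0) :
    MonotoneOn ϖ (Icc 0 R) ∧ ∀ r ∈ Icc (0:ℝ) R, ϖ₀ ≤ ϖ r := by
  classical
  set u : ℝ → ℝ := fun s => j s * s ^ 4 * ϖ' s with hu_def
  have hu0 : u 0 = 0 := by simp [hu_def, h0']
  have hu_cont : ContinuousOn u (Icc 0 R) :=
    (hjc.mul ((continuous_pow 4).continuousOn)).mul hϖ'c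
  -- key: nonnegativity of u on [0,T] gives monotonicity of ϖ on [0,T]
  have key : ∀ T, T ∈ Icc (0:ℝ) R → (∀ s ∈ Icc (0:ℝ) T, 0 ≤ u s) →
      MonotoneOn ϖ (Icc 0 T) := by
    intro T hT hu
    have hsub : Icc (0:ℝ) T ⊆ Icc 0 R := Icc_subset_Icc le_rfl hT.2
    have hsub' : Ioo (0:ℝ) T ⊆ Ioo 0 R := Ioo_subset_Ioo le_rfl hT.2
    apply monotoneOn_of_deriv_nonneg (convex_Icc 0 T) (hϖc.mono hsub)
    · intro s hs
      rw [interior_Icc] at hs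
      exact (hder s (hsub' hs)).differentiableAt.differentiableWithinAt
    · intro s hs
      rw [interior_Icc] at hs
      rw [(hder s (hsub' hs)).deriv]
      have hpos : 0 < j s * s ^ 4 :=
        mul_pos (hjpos s (hsub (Ioo_subset_Icc_self hs))) (pow_pos hs.1 4)
      have hus : 0 ≤ j s * s ^ 4 * ϖ' s := hu s (Ioo_subset_Icc_self hs)
      by_contra hneg
      push_neg at hneg
      nlinarith
  -- continuous induction set
  set S : Set ℝ := {T | T ∈ Icc (0:ℝ) R ∧ ∀ s ∈ Icc (0:ℝ) T, 0 ≤ u s} with hS_def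
  have h0S : (0:ℝ) ∈ S := by
    refine ⟨⟨le_rfl, hR.le⟩, ?_⟩
    intro s hs
    have : s = 0 := le_antisymm hs.2 hs.1
    simp [this, hu0]
  have hne : S.Nonempty := ⟨0, h0S⟩
  have hbdd : BddAbove S := ⟨R, fun x hx => hx.1.2⟩
  set T₀ := sSup S with hT0_def
  have hT0mem : T₀ ∈ Icc (0:ℝ) R :=
    ⟨le_csSup hbdd h0S, csSup_le hne fun x hx => hx.1.2⟩
  -- u ≥ 0 on [0, T₀]
  have hT0S : ∀ s ∈ Icc (0:ℝ) T₀, 0 ≤ u s := by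
    intro s hs
    rcases eq_or_lt_of_le hs.2 with heq | hlt
    · -- s = T₀
      by_contra hneg
      push_neg at hneg
      rcases eq_or_lt_of_le hs.1 with h0s | h0s
      · rw [← h0s, hu0] at hneg; exact absurd hneg (by norm_num)
      · have hsR : s ∈ Icc (0:ℝ) R := ⟨hs.1, heq ▸ hT0mem.2⟩
        have hc : ContinuousWithinAt u (Icc 0 R) s := hu_cont s hsR
        have hmem : u ⁻¹' Iio 0 ∈ nhdsWithin s (Icc 0 R) :=
          hc (Iio_mem_nhds hneg)
        rw [Metric.mem_nhdsWithin_iff] at hmem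
        obtain ⟨ε, hε, hball⟩ := hmem
        set s' : ℝ := max (s - ε / 2) (s / 2) with hs'_def
        have hs'lt : s' < s := max_lt (by linarith) (by linarith)
        have hs'pos : 0 < s' := lt_of_lt_of_le (by linarith) (le_max_right _ _)
        have hs'R : s' ∈ Icc (0:ℝ) R := ⟨hs'pos.le, le_trans hs'lt.le hsR.2⟩
        have hs'ball : s' ∈ Metric.ball s ε := by
          rw [Metric.mem_ball, Real.dist_eq, abs_of_neg (by linarith : s' - s < 0)]
          have : s - ε / 2 ≤ s' := le_max_left _ _
          linarith
        have hus' : u s' < 0 := hball ⟨hs'ball, hs'R⟩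
        have hs'T : s' < T₀ := heq ▸ hs'lt
        obtain ⟨T, hTS, hsT⟩ := exists_lt_of_lt_csSup hne hs'T
        exact absurd (hTS.2 s' ⟨hs'pos.le, hsT.le⟩) (not_le.mpr hus')
    · obtain ⟨T, hTS, hsT⟩ := exists_lt_of_lt_csSup hne hlt
      exact hTS.2 s ⟨hs.1, hsT.le⟩
  -- claim T₀ = R
  have hT0R : T₀ = R := by
    by_contra hne'
    have hT0lt : T₀ < R := lt_of_le_of_ne hT0mem.2 hne'
    have hmono : MonotoneOn ϖ (Icc 0 T₀) := key T₀ hT0mem hT0S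
    have hge : ∀ s ∈ Icc (0:ℝ) T₀, ϖ₀ ≤ ϖ s := by
      intro s hs
      have := hmono ⟨le_rfl, hT0mem.1⟩ hs hs.1
      rwa [h0] at this
    have hϖT0 : 0 < ϖ T₀ := lt_of_lt_of_le hϖ₀ (hge T₀ ⟨hT0mem.1, le_rfl⟩)
    have hc : ContinuousWithinAt ϖ (Icc 0 R) T₀ := hϖc T₀ hT0mem
    have hmem : ϖ ⁻¹' Ioi 0 ∈ nhdsWithin T₀ (Icc 0 R) := hc (Ioi_mem_nhds hϖT0)
    rw [Metric.mem_nhdsWithin_iff] at hmem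
    obtain ⟨ε, hε, hball⟩ := hmem
    set δ : ℝ := min (ε / 2) (R - T₀) with hδ_def
    have hδpos : 0 < δ := lt_min (by linarith) (by linarith)
    set T₁ : ℝ := T₀ + δ with hT1_def
    have hT1R : T₁ ≤ R := by
      have : δ ≤ R - T₀ := min_le_right _ _
      simp only [hT1_def]; linarith
    have hT1mem : T₁ ∈ Icc (0:ℝ) R := ⟨by have := hT0mem.1; simp only [hT1_def]; linarith, hT1R⟩
    -- ϖ ≥ 0 on [0, T₁]
    have hϖnn : ∀ x ∈ Icc (0:ℝ) T₁, 0 ≤ ϖ x := by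
      intro x hx
      rcases le_or_gt x T₀ with h | h
      · exact le_trans hϖ₀.le (hge x ⟨hx.1, h⟩)
      · have hxR : x ∈ Icc (0:ℝ) R := ⟨hx.1, le_trans hx.2 hT1R⟩
        have hxball : x ∈ Metric.ball T₀ ε := by
          rw [Metric.mem_ball, Real.dist_eq, abs_of_pos (by linarith : (0:ℝ) < x - T₀)]
          have h1 : x ≤ T₀ + δ := hx.2
          have h2 : δ ≤ ε / 2 := min_le_left _ _
          linarith
        exact (hball ⟨hxball, hxR⟩).le
    -- u monotone on [0, T₁]
    have humono : MonotoneOn u (Icc 0 T₁) := by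
      have hsub : Icc (0:ℝ) T₁ ⊆ Icc 0 R := Icc_subset_Icc le_rfl hT1R
      have hsub' : Ioo (0:ℝ) T₁ ⊆ Ioo 0 R := Ioo_subset_Ioo le_rfl hT1R
      apply monotoneOn_of_deriv_nonneg (convex_Icc 0 T₁) (hu_cont.mono hsub)
      · intro r hr
        rw [interior_Icc] at hr
        exact (hode r (hsub' hr)).differentiableAt.differentiableWithinAt
      · intro r hr
        rw [interior_Icc] at hr
        rw [(hode r (hsub' hr)).deriv]
        have hrR : r ∈ Icc (0:ℝ) R := hsub (Ioo_subset_Icc_self hr)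
        have h1 : 0 < 16 * Real.pi * (ρ r + p r) * elam r * j r * r ^ 4 :=
          mul_pos (mul_pos (mul_pos (mul_pos
            (mul_pos (by norm_num : (0:ℝ) < 16) Real.pi_pos)
            (add_pos (hρpos r hrR) (hppos r hrR))) (helampos r hrR)) (hjpos r hrR))
            (pow_pos hr.1 4)
        exact mul_nonneg h1.le (hϖnn r (Ioo_subset_Icc_self hr))
    have hT1S : T₁ ∈ S := by
      refine ⟨hT1mem, fun s hs => ?_⟩
      have h0T1 : (0:ℝ) ∈ Icc (0:ℝ) T₁ := ⟨le_rfl, by have := hT0mem.1; simp only [hT1_def]; linarith⟩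
      have := humono h0T1 hs hs.1
      rw [hu0] at this
      exact this
    have : T₁ ≤ T₀ := le_csSup hbdd hT1S
    linarith
  -- conclude
  have huR : ∀ s ∈ Icc (0:ℝ) R, 0 ≤ u s := hT0R ▸ hT0S
  have hmono : MonotoneOn ϖ (Icc 0 R) := key R ⟨hR.le, le_rfl⟩ huR
  refine ⟨hmono, fun r hr => ?_⟩
  have := hmono ⟨le_rfl, hR.le⟩ hr hr.1
  rwa [h0] at this
end

section
/- Let m be a nonzero integer, Ω > 0, Λ = l(l+1) with l ≥ 2, and let ϖ : (0,∞) → ℝ be continuous with ϖ₀ ≤ ϖ(r) ≤ Ω for all r, where 0 < ϖ₀ < Ω. Assume further D(r) := 1 − (m²/Λ) ω(r) ϖ(r) r² e^{−ν(r)} ∈ (0,1] for all r. Then every value σ of the form σ = i m (Ω − (2/Λ) ϖ(r)) / D(r) for some r > 0 is purely imaginary with Im(σ)/m ≥ Ω(1 − 2/Λ) > 0 (for m > 0); i.e., the candidate continuous spectrum lies on the positive imaginary axis at distance at least m Ω (Λ−2)/Λ from the origin. -/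
open Set

/-- Every candidate continuous-spectrum value `σ = im(Ω − (2/Λ)ϖ(r))/D(r)` with
`ϖ₀ ≤ ϖ ≤ Ω` and `D(r) ∈ (0,1]` is purely imaginary with `Im(σ)/m ≥ Ω(1 − 2/Λ) > 0`
(for `m > 0`), i.e. it lies on the positive imaginary axis at distance at least
`mΩ(Λ−2)/Λ` from the origin. -/
theorem stmt15 (m l : ℤ) (hm : 0 < m) (hl : 2 ≤ l) (Λ : ℝ)
    (hΛ : Λ = (l : ℝ) * ((l : ℝ) + 1))
    (Ω ϖ₀ : ℝ) (hϖ₀ : 0 < ϖ₀) (hΩ : ϖ₀ < Ω)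
    (ϖ ω ν D : ℝ → ℝ)
    (hϖc : ContinuousOn ϖ (Ioi 0))
    (hbound : ∀ r > (0:ℝ), ϖ₀ ≤ ϖ r ∧ ϖ r ≤ Ω)
    (hD : ∀ r > (0:ℝ), D r = 1 - ((m : ℝ) ^ 2 / Λ) * ω r * ϖ r * r ^ 2 * Real.exp (-ν r))
    (hDmem : ∀ r > (0:ℝ), D r ∈ Ioc (0:ℝ) 1)
    (σ : ℂ) (r : ℝ) (hr : 0 < r)
    (hσ : σ = Complex.I * (m : ℂ) * (((Ω - (2 / Λ) * ϖ r : ℝ)) : ℂ) / ((D r : ℝ) : ℂ)) :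
    σ.re = 0 ∧ Ω * (1 - 2 / Λ) ≤ σ.im / (m : ℝ) ∧ 0 < Ω * (1 - 2 / Λ) := by
  obtain ⟨hD0, hD1⟩ := hDmem r hr
  obtain ⟨hb1, hb2⟩ := hbound r hr
  have hl6 : (6:ℝ) ≤ Λ := by
    rw [hΛ]
    have : (2:ℝ) ≤ (l:ℝ) := by exact_mod_cast hl
    nlinarith
  have hΛ0 : 0 < Λ := by linarith
  have hΩ0 : 0 < Ω := lt_trans hϖ₀ hΩ
  have hfac : 0 < 1 - 2 / Λ := by
    have : 2 / Λ ≤ 2 / 6 := div_le_div_of_nonneg_left (by norm_num) (by norm_num) hl6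
    linarith
  set x : ℝ := Ω - (2 / Λ) * ϖ r with hx
  have hσ' : σ = ((x * ((m:ℝ) / D r) : ℝ) : ℂ) * Complex.I := by
    rw [hσ]
    push_cast
    field_simp
  have hre : σ.re = 0 := by rw [hσ']; simp
  have him : σ.im = x * ((m:ℝ) / D r) := by rw [hσ']; simp
  refine ⟨hre, ?_, mul_pos hΩ0 hfac⟩
  have hm0 : (0:ℝ) < (m:ℝ) := by exact_mod_cast hm
  have hxge : Ω * (1 - 2 / Λ) ≤ x := by
    have h2Λ : 0 < 2 / Λ := by positivity
    have : (2 / Λ) * ϖ r ≤ (2 / Λ) * Ω := by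
      exact mul_le_mul_of_nonneg_left hb2 (le_of_lt h2Λ)
    rw [hx]; nlinarith
  have hx0 : 0 < x := lt_of_lt_of_le (mul_pos hΩ0 hfac) hxge
  have hxd : x ≤ x / D r := by
    rw [le_div_iff₀ hD0]
    nlinarith
  rw [him]
  calc Ω * (1 - 2 / Λ) ≤ x := hxge
    _ ≤ x / D r := hxd
    _ = x * ((m:ℝ) / D r) / (m:ℝ) := by field_simp
end
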